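/- arXiv:2604.02653 — 2 statements merged into one kernel-verified Lean document; each statement's English description precedes it below -/
import Mathlib

section
/- Define the binary cross entropy loss with soft label q ∈ [0,1] by BCE_q(z) = −[q·log σ(z) + (1−q)·log(1−σ(z))], where σ(z) = 1/(1+e^{−z}). Then for all z ∈ ℝ, setting s = σ(z), the product-stability satisfies the exact formula α_{BCE_q}(z) = 3(BCE_q'''(z))² − BCE_q''''(z)·BCE_q''(z) = 2·s²·(1−s)²·(3s² − 3s + 1). -/
/-!
Since `σ' = σ (1 - σ)` and `BCE_q' = σ - q`, every derivative of `BCE_q` is a polynomial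
in `σ`, obtained from `X - q` by iterating `p ↦ p' · (X - X²)`. The product-stability formula
is then an identity between polynomials in `σ`.
-/

/-- The sigmoid function `σ(z) = 1/(1 + e^{-z})`. -/
noncomputable def sigmoid (z : ℝ) : ℝ := 1 / (1 + Real.exp (-z))

/-- Binary cross entropy loss with soft label `q`. -/
noncomputable def BCE (q : ℝ) (z : ℝ) : ℝ :=
  -(q * Real.log (sigmoid z) + (1 - q) * Real.log (1 - sigmoid z))

open Polynomial

lemma one_sub_sigmoid (z : ℝ) : 1 - sigmoid z = Real.exp (-z) / (1 + Real.exp (-z)) := by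
  have : 1 + Real.exp (-z) ≠ 0 := by positivity
  rw [sigmoid]; field_simp; ring

lemma hasDerivAt_sigmoid (z : ℝ) : HasDerivAt sigmoid (sigmoid z * (1 - sigmoid z)) z := by
  have hne : 1 + Real.exp (-z) ≠ 0 := by positivity
  have h := ((Real.hasDerivAt_exp (-z)).comp z (hasDerivAt_neg z)).const_add 1
  refine ((hasDerivAt_const z (1 : ℝ)).div h hne).congr_deriv ?_
  rw [one_sub_sigmoid, sigmoid]
  simp only [Function.comp_apply, mul_neg, mul_one, zero_mul, one_mul, zero_sub, neg_neg, one_div]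
  field_simp

lemma BCE_eq_log_add (q z : ℝ) : BCE q z = Real.log (1 + Real.exp (-z)) + (1 - q) * z := by
  have hpos : 0 < 1 + Real.exp (-z) := by positivity
  rw [BCE, one_sub_sigmoid, sigmoid, Real.log_div (Real.exp_ne_zero _) hpos.ne',
    Real.log_div one_ne_zero hpos.ne', Real.log_exp, Real.log_one]
  ring

lemma hasDerivAt_BCE (q z : ℝ) : HasDerivAt (BCE q) (sigmoid z - q) z := by
  have hne : 1 + Real.exp (-z) ≠ 0 := by positivity
  have h := (((Real.hasDerivAt_exp (-z)).comp z (hasDerivAt_neg z)).const_add 1).log hne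
    |>.add ((hasDerivAt_id z).const_mul (1 - q))
  rw [show BCE q = _ from funext (BCE_eq_log_add q)]
  refine h.congr_deriv ?_
  simp only [Function.comp_apply, sigmoid, one_div, mul_neg, mul_one]
  field_simp
  ring

noncomputable def sigmoidDeriv (p : ℝ[X]) : ℝ[X] := derivative p * (X - X ^ 2)

lemma deriv_eval_sigmoid (p : ℝ[X]) :
    deriv (fun z => p.eval (sigmoid z)) = fun z => (sigmoidDeriv p).eval (sigmoid z) := by
  ext z
  refine ((p.hasDerivAt (sigmoid z)).comp z (hasDerivAt_sigmoid z)).deriv.trans ?_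
  simp only [sigmoidDeriv, eval_mul, eval_sub, eval_X, eval_pow]
  ring

lemma iteratedDeriv_succ_BCE (q : ℝ) (n : ℕ) :
    iteratedDeriv (n + 1) (BCE q) = fun z => (sigmoidDeriv^[n] (X - C q)).eval (sigmoid z) := by
  induction n with
  | zero =>
    ext z
    simpa using (hasDerivAt_BCE q z).deriv
  | succ n ih =>
    rw [iteratedDeriv_succ, ih, deriv_eval_sigmoid, Function.iterate_succ_apply']

theorem bce_product_stability_formula_general (q : ℝ) (z : ℝ) :
    3 * (iteratedDeriv 3 (BCE q) z) ^ 2 -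
        iteratedDeriv 4 (BCE q) z * iteratedDeriv 2 (BCE q) z =
      2 * (sigmoid z) ^ 2 * (1 - sigmoid z) ^ 2 *
        (3 * (sigmoid z) ^ 2 - 3 * sigmoid z + 1) := by
  simp only [iteratedDeriv_succ_BCE, Function.iterate_succ_apply', Function.iterate_zero_apply,
    sigmoidDeriv, derivative_mul, derivative_sub, derivative_sq, derivative_add, derivative_X,
    derivative_C, derivative_one, derivative_zero, eval_mul, eval_sub, eval_add, eval_pow, eval_X,
    eval_C, eval_one, eval_zero]
  ring

/-- Exact formula for the product-stability of the binary cross entropy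
loss: with `s = σ(z)`, `α_{BCE_q}(z) = 2 s² (1−s)² (3s² − 3s + 1)`. -/
theorem bce_product_stability_formula (q : ℝ) (hq0 : 0 ≤ q) (hq1 : q ≤ 1) (z : ℝ) :
    3 * (iteratedDeriv 3 (BCE q) z) ^ 2 -
        iteratedDeriv 4 (BCE q) z * iteratedDeriv 2 (BCE q) z =
      2 * (sigmoid z) ^ 2 * (1 - sigmoid z) ^ 2 *
        (3 * (sigmoid z) ^ 2 - 3 * sigmoid z + 1) :=
  bce_product_stability_formula_general q z
end

section
/- For 0 < a ≤ 1 and a constant C_a > 0, define l_a(z) = C_a·(log(e^{z−1} + 1) + log(e^{1−z} + 1))^a. Then l_a is product-stable at its minimum z = 1: α_{l_a}(1) = 3(l_a'''(1))² − l_a''''(1)·l_a''(1) > 0. -/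
/-!
Write `l = C G^a` with `G' = W = tanh ((z - 1) / 2)` and `W' = (1 - W²) / 2`. Differentiating
four times and evaluating at `z = 1`, where `W = 0`, gives `l'''(1) = 0`,
`l''(1) = C a G^(a-1) / 2 > 0` and `l''''(1) = C a (3 (a - 1) G^(a-2) - G^(a-1)) / 4 < 0`
(this is where `a ≤ 1` enters), so `α = -l'''' l'' > 0`.
-/

open Real

noncomputable def symSoftplus (z : ℝ) : ℝ :=
  log (exp (z - 1) + 1) + log (exp (1 - z) + 1)

/-- Equals `tanh ((z - 1) / 2)`. -/
noncomputable def symSoftplusSlope (z : ℝ) : ℝ :=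
  (exp (z - 1) - 1) / (exp (z - 1) + 1)

noncomputable def productStability (f : ℝ → ℝ) (z : ℝ) : ℝ :=
  3 * iteratedDeriv 3 f z ^ 2 - iteratedDeriv 4 f z * iteratedDeriv 2 f z

local notation "G" => symSoftplus
local notation "W" => symSoftplusSlope

lemma symSoftplus_pos (z : ℝ) : 0 < G z :=
  add_pos (log_pos (by linarith [exp_pos (z - 1)])) (log_pos (by linarith [exp_pos (1 - z)]))

lemma symSoftplusSlope_one : W 1 = 0 := by
  simp [symSoftplusSlope]

lemma hasDerivAt_exp_sub (c z : ℝ) : HasDerivAt (fun z => exp (z - c)) (exp (z - c)) z := by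
  simpa using ((hasDerivAt_id z).sub_const c).exp

lemma hasDerivAt_symSoftplus (z : ℝ) : HasDerivAt G (W z) z := by
  have hv : HasDerivAt (fun z => exp (1 - z)) (-exp (1 - z)) z := by
    simpa using ((hasDerivAt_id z).const_sub 1).exp
  have h := ((hasDerivAt_exp_sub 1 z).add_const 1).log (by positivity)
    |>.add ((hv.add_const 1).log (by positivity))
  refine h.congr_deriv ?_
  have hinv : exp (1 - z) = (exp (z - 1))⁻¹ := by rw [← exp_neg, neg_sub]
  have : exp (z - 1) ≠ 0 := (exp_pos _).ne'
  rw [symSoftplusSlope, hinv]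
  field_simp
  ring

lemma hasDerivAt_symSoftplusSlope (z : ℝ) : HasDerivAt W ((1 - W z ^ 2) / 2) z := by
  have h := ((hasDerivAt_exp_sub 1 z).sub_const 1).div
    ((hasDerivAt_exp_sub 1 z).add_const 1) (by positivity)
  refine h.congr_deriv ?_
  have : exp (z - 1) + 1 ≠ 0 := by positivity
  rw [symSoftplusSlope]
  field_simp
  ring

lemma hasDerivAt_symSoftplus_rpow (p z : ℝ) :
    HasDerivAt (fun z => G z ^ p) (p * G z ^ (p - 1) * W z) z := by
  refine ((hasDerivAt_symSoftplus z).rpow_const (Or.inl (symSoftplus_pos z).ne')).congr_deriv ?_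
  ring

section loss

variable (C a : ℝ)

lemma iteratedDeriv_one_loss :
    iteratedDeriv 1 (fun z => C * G z ^ a) = fun z => C * a * (G z ^ (a - 1) * W z) := by
  rw [iteratedDeriv_one]
  refine deriv_eq fun z => ?_
  refine ((hasDerivAt_symSoftplus_rpow a z).const_mul C).congr_deriv ?_
  ring

lemma iteratedDeriv_two_loss :
    iteratedDeriv 2 (fun z => C * G z ^ a) = fun z =>
      C * a * ((a - 1) * (G z ^ (a - 2) * W z ^ 2) + G z ^ (a - 1) * ((1 - W z ^ 2) / 2)) := by
  rw [iteratedDeriv_succ, iteratedDeriv_one_loss]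
  refine deriv_eq fun z => ?_
  refine (((hasDerivAt_symSoftplus_rpow (a - 1) z).fun_mul
    (hasDerivAt_symSoftplusSlope z)).const_mul (C * a)).congr_deriv ?_
  rw [show a - 1 - 1 = a - 2 by ring]
  ring

lemma iteratedDeriv_three_loss :
    iteratedDeriv 3 (fun z => C * G z ^ a) = fun z =>
      C * a * ((a - 1) * (a - 2) * (G z ^ (a - 3) * W z ^ 3)
        + 3 * (a - 1) * (G z ^ (a - 2) * (W z * ((1 - W z ^ 2) / 2)))
        - G z ^ (a - 1) * (W z * ((1 - W z ^ 2) / 2))) := by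
  rw [iteratedDeriv_succ, iteratedDeriv_two_loss]
  refine deriv_eq fun z => ?_
  have hW := hasDerivAt_symSoftplusSlope z
  have hA := ((hasDerivAt_symSoftplus_rpow (a - 2) z).fun_mul (hW.fun_pow 2)).const_mul (a - 1)
  have hB := (hasDerivAt_symSoftplus_rpow (a - 1) z).fun_mul
    (((hW.fun_pow 2).const_sub 1).div_const 2)
  refine ((hA.fun_add hB).const_mul (C * a)).congr_deriv ?_
  rw [show a - 2 - 1 = a - 3 by ring, show a - 1 - 1 = a - 2 by ring]
  push_cast
  ring

lemma iteratedDeriv_two_loss_one :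
    iteratedDeriv 2 (fun z => C * G z ^ a) 1 = C * a * G 1 ^ (a - 1) / 2 := by
  simp only [iteratedDeriv_two_loss, symSoftplusSlope_one]
  ring

lemma iteratedDeriv_three_loss_one : iteratedDeriv 3 (fun z => C * G z ^ a) 1 = 0 := by
  simp only [iteratedDeriv_three_loss, symSoftplusSlope_one]
  ring

lemma iteratedDeriv_four_loss_one :
    iteratedDeriv 4 (fun z => C * G z ^ a) 1
      = C * a * (3 * (a - 1) * G 1 ^ (a - 2) - G 1 ^ (a - 1)) / 4 := by
  rw [iteratedDeriv_succ, iteratedDeriv_three_loss]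
  have hW := hasDerivAt_symSoftplusSlope 1
  have hWV := hW.fun_mul (((hW.fun_pow 2).const_sub 1).div_const 2)
  have hA := ((hasDerivAt_symSoftplus_rpow (a - 3) 1).fun_mul (hW.fun_pow 3)).const_mul
    ((a - 1) * (a - 2))
  have hB := ((hasDerivAt_symSoftplus_rpow (a - 2) 1).fun_mul hWV).const_mul (3 * (a - 1))
  have hC := (hasDerivAt_symSoftplus_rpow (a - 1) 1).fun_mul hWV
  refine ((((hA.fun_add hB).fun_sub hC).const_mul (C * a)).congr_deriv ?_).deriv
  rw [symSoftplusSlope_one]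
  push_cast
  ring

lemma productStability_loss_one :
    productStability (fun z => C * G z ^ a) 1
      = (C * a) ^ 2 * G 1 ^ (a - 1) * (G 1 ^ (a - 1) + 3 * (1 - a) * G 1 ^ (a - 2)) / 8 := by
  rw [productStability, iteratedDeriv_two_loss_one, iteratedDeriv_three_loss_one,
    iteratedDeriv_four_loss_one]
  ring

end loss

/-- The loss `l_a(z) = C_a (log(e^{z−1} + 1) + log(e^{1−z} + 1))^a`
of Wang et al. with degree of regularity `a ∈ (0,1]` is product-stable at its
minimum `z = 1`. -/
theorem degree_of_regularity_loss_product_stable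
    (a : ℝ) (ha0 : 0 < a) (ha1 : a ≤ 1) (C : ℝ) (hC : 0 < C)
    (l : ℝ → ℝ)
    (hl : ∀ z : ℝ,
      l z = C * (Real.log (Real.exp (z - 1) + 1) + Real.log (Real.exp (1 - z) + 1)) ^ a) :
    0 < 3 * (iteratedDeriv 3 l 1) ^ 2 - iteratedDeriv 4 l 1 * iteratedDeriv 2 l 1 := by
  obtain rfl : l = fun z => C * G z ^ a := funext hl
  change 0 < productStability _ 1
  rw [productStability_loss_one]
  have hG := symSoftplus_pos 1
  have h1a : 0 ≤ 1 - a := by linarith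
  positivity
end
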